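/- arXiv:1906.09644 — 3 statements merged into one kernel-verified Lean document; each statement's English description precedes it below -/
import Mathlib

section
/- Let A be a non-empty bounded subset of the reals and λ a real number. Then sup_{a∈A} |λ - a| = |λ - (inf A + sup A)/2| + (sup A - inf A)/2. -/
theorem stmt_2 (A : Set ℝ) (hne : A.Nonempty) (hbdd : BddAbove A) (hbdd' : BddBelow A)
    (l : ℝ) :
    sSup ((fun a => |l - a|) '' A)
      = |l - (sInf A + sSup A) / 2| + (sSup A - sInf A) / 2 := by
  set m := sInf A with hm
  set M := sSup A with hM
  have hmM : m ≤ M := Real.sInf_le_sSup A hbdd' hbdd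
  have hub : ∀ x ∈ (fun a => |l - a|) '' A, x ≤ max (|l - m|) (|l - M|) := by
    rintro _ ⟨a, ha, rfl⟩
    dsimp only
    have h1 : m ≤ a := csInf_le hbdd' ha
    have h2 : a ≤ M := le_csSup hbdd ha
    rcases le_total a l with h | h
    · refine le_trans ?_ (le_max_left _ _)
      rw [abs_of_nonneg (by linarith)]
      calc l - a ≤ l - m := by linarith
        _ ≤ |l - m| := le_abs_self _
    · refine le_trans ?_ (le_max_right _ _)
      rw [abs_of_nonpos (by linarith)]
      calc -(l - a) ≤ -(l - M) := by linarith
        _ ≤ |l - M| := neg_le_abs _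
  have hbd : BddAbove ((fun a => |l - a|) '' A) := ⟨_, hub⟩
  have key : sSup ((fun a => |l - a|) '' A) = max (|l - m|) (|l - M|) := by
    apply le_antisymm
    · exact csSup_le (hne.image _) hub
    · rw [max_le_iff]
      constructor
      · apply le_of_forall_pos_le_add
        intro ε hε
        obtain ⟨a, ha, hlt⟩ := Real.lt_sInf_add_pos hne hε
        have h1 : m ≤ a := csInf_le hbdd' ha
        have h2 : |l - a| ≤ sSup ((fun a => |l - a|) '' A) :=
          le_csSup hbd ⟨a, ha, rfl⟩
        rw [← hm] at hlt
        have h3 : |a - m| ≤ ε := by rw [abs_of_nonneg (by linarith)]; linarith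
        calc |l - m| ≤ |l - a| + |a - m| := abs_sub_le l a m
          _ ≤ sSup ((fun a => |l - a|) '' A) + ε := by linarith
      · apply le_of_forall_pos_le_add
        intro ε hε
        obtain ⟨a, ha, hlt⟩ := Real.add_neg_lt_sSup hne (neg_neg_of_pos hε)
        have h1 : a ≤ M := le_csSup hbdd ha
        have h2 : |l - a| ≤ sSup ((fun a => |l - a|) '' A) :=
          le_csSup hbd ⟨a, ha, rfl⟩
        rw [← hM] at hlt
        have h3 : |a - M| ≤ ε := by rw [abs_of_nonpos (by linarith)]; linarith
        calc |l - M| ≤ |l - a| + |a - M| := abs_sub_le l a M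
          _ ≤ sSup ((fun a => |l - a|) '' A) + ε := by linarith
  rw [key]
  rcases abs_cases (l - m) with ⟨e1, _⟩ | ⟨e1, _⟩ <;>
  rcases abs_cases (l - M) with ⟨e2, _⟩ | ⟨e2, _⟩ <;>
  rcases abs_cases (l - (m + M) / 2) with ⟨e3, _⟩ | ⟨e3, _⟩ <;>
  rw [max_def] <;> split_ifs <;> linarith
end

section
/- Every correspondence R between non-empty sets X and Y contains a correspondence R₀ that is minimal with respect to inclusion (an irreducible correspondence). -/
open Set Metric
open scoped ENNReal

universe u

/-- The distortion of a relation between two metric spaces, valued in `[0,∞]`. -/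
noncomputable def relDis {X Y : Type u} [MetricSpace X] [MetricSpace Y]
    (σ : Set (X × Y)) : ℝ≥0∞ :=
  ⨆ p ∈ σ, ⨆ q ∈ σ, ENNReal.ofReal |dist p.1 q.1 - dist p.2 q.2|

/-- A correspondence between `X` and `Y`: a relation whose projections are surjective. -/
def IsCorrespondence {X Y : Type u} (R : Set (X × Y)) : Prop :=
  (∀ x : X, ∃ y : Y, (x, y) ∈ R) ∧ (∀ y : Y, ∃ x : X, (x, y) ∈ R)

/-- A realization of the pair `(X, Y)`: isometric embeddings into a common space. -/
structure GHEmbed (X Y : Type u) [MetricSpace X] [MetricSpace Y] where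
  Z : Type u
  [instZ : MetricSpace Z]
  f : X → Z
  g : Y → Z
  hf : Isometry f
  hg : Isometry g

noncomputable def GHEmbed.hd {X Y : Type u} [MetricSpace X] [MetricSpace Y]
    (e : GHEmbed X Y) : ℝ≥0∞ := by
  letI := e.instZ
  exact EMetric.hausdorffEdist (Set.range e.f) (Set.range e.g)

/-- The Gromov–Hausdorff distance, valued in `[0,∞]`. -/
noncomputable def ghDist (X Y : Type u) [MetricSpace X] [MetricSpace Y] : ℝ≥0∞ :=
  ⨅ e : GHEmbed X Y, e.hd

/-- A partition of `X` into non-empty pairwise disjoint parts covering `X`. -/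
def IsPartition {X : Type u} (D : Set (Set X)) : Prop :=
  (∀ A ∈ D, A.Nonempty) ∧ D.PairwiseDisjoint id ∧ ⋃₀ D = Set.univ

/-- `diam D`: the supremum of the diameters of the parts of `D`. -/
noncomputable def diamP {X : Type u} [MetricSpace X] (D : Set (Set X)) : ℝ :=
  sSup (Metric.diam '' D)

/-- `α(D)`: the infimum of distances between points of distinct parts. -/
noncomputable def alphaP {X : Type u} [MetricSpace X] (D : Set (Set X)) : ℝ :=
  sInf {d | ∃ A ∈ D, ∃ B ∈ D, A ≠ B ∧ ∃ a ∈ A, ∃ b ∈ B, d = dist a b}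

/-- `β(D)`: the supremum of distances between points of distinct parts. -/
noncomputable def betaP {X : Type u} [MetricSpace X] (D : Set (Set X)) : ℝ :=
  sSup {d | ∃ A ∈ D, ∃ B ∈ D, A ≠ B ∧ ∃ a ∈ A, ∃ b ∈ B, d = dist a b}

/-- Every correspondence between non-empty sets contains an irreducible (inclusion-
minimal) correspondence. -/
theorem stmt_11 {X Y : Type u} [Nonempty X] [Nonempty Y]
    (R : Set (X × Y)) (hR : IsCorrespondence R) :
    ∃ R₀ : Set (X × Y), R₀ ⊆ R ∧ IsCorrespondence R₀ ∧
      ∀ R' : Set (X × Y), IsCorrespondence R' → R' ⊆ R₀ → R' = R₀ := by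
  obtain ⟨hX, hY⟩ := hR
  choose f hf using hX
  choose g hg using hY
  -- matchings inside R
  set S : Set (Set (X × Y)) := {M | M ⊆ R ∧ (∀ p ∈ M, ∀ q ∈ M, p.1 = q.1 → p = q) ∧
    (∀ p ∈ M, ∀ q ∈ M, p.2 = q.2 → p = q)} with hSdef
  have hchainUB : ∀ c ⊆ S, IsChain (· ⊆ ·) c → ∃ ub ∈ S, ∀ s ∈ c, s ⊆ ub := by
    intro c hcS hchain
    refine ⟨⋃₀ c, ⟨?_, ?_, ?_⟩, fun s hs => subset_sUnion_of_mem hs⟩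
    · exact sUnion_subset fun s hs => (hcS hs).1
    · rintro p ⟨s, hs, hps⟩ q ⟨t, ht, hqt⟩ h
      rcases hchain.total hs ht with hst | hts
      · exact (hcS ht).2.1 p (hst hps) q hqt h
      · exact (hcS hs).2.1 p hps q (hts hqt) h
    · rintro p ⟨s, hs, hps⟩ q ⟨t, ht, hqt⟩ h
      rcases hchain.total hs ht with hst | hts
      · exact (hcS ht).2.2 p (hst hps) q hqt h
      · exact (hcS hs).2.2 p hps q (hts hqt) h
  obtain ⟨M, hMS, hMmax⟩ := zorn_subset S hchainUB
  obtain ⟨hMR, hM1, hM2⟩ := hMS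
  set Xm : Set X := Prod.fst '' M with hXm
  set Ym : Set Y := Prod.snd '' M with hYm
  -- maximality: any R-edge from an unmatched x goes to a matched y
  have hmax : ∀ x y, (x, y) ∈ R → x ∉ Xm → y ∈ Ym := by
    intro x y hxy hx
    by_contra hy
    have hins : insert (x, y) M ∈ S := by
      refine ⟨insert_subset hxy hMR, ?_, ?_⟩
      · rintro p (rfl | hp) q (rfl | hq) h
        · rfl
        · exact absurd ⟨q, hq, h.symm⟩ hx
        · exact absurd ⟨p, hp, h⟩ hx
        · exact hM1 p hp q hq h
      · rintro p (rfl | hp) q (rfl | hq) h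
        · rfl
        · exact absurd ⟨q, hq, h.symm⟩ hy
        · exact absurd ⟨p, hp, h⟩ hy
        · exact hM2 p hp q hq h
    have := hMmax hins (subset_insert _ _)
    exact hx ⟨(x, y), this (mem_insert _ _), rfl⟩
  have hmax' : ∀ x y, (x, y) ∈ R → y ∉ Ym → x ∈ Xm := by
    intro x y hxy hy
    by_contra hx
    exact hy (hmax x y hxy hx)
  -- the candidate minimal correspondence
  set A : Set (X × Y) := {p | p.2 = f p.1 ∧ p.1 ∉ Xm} with hA
  set B : Set (X × Y) := {p | p.1 = g p.2 ∧ p.2 ∉ Ym} with hB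
  set C : Set (X × Y) := {p ∈ M | ¬((∃ y ∉ Ym, g y = p.1) ∧ (∃ x ∉ Xm, f x = p.2))} with hC
  refine ⟨A ∪ B ∪ C, ?_, ⟨?_, ?_⟩, ?_⟩
  · rintro ⟨x, y⟩ ((⟨h1, _⟩ | ⟨h1, _⟩) | ⟨hp, _⟩)
    · simp only at h1; subst h1; exact hf x
    · simp only at h1; subst h1; exact hg y
    · exact hMR hp
  -- covers X
  · intro x
    by_cases hx : x ∈ Xm
    · obtain ⟨p, hp, hpx⟩ := hx
      by_cases hpc : p ∈ C
      · exact ⟨p.2, by rw [← hpx]; exact Or.inr hpc⟩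
      · have : (∃ y ∉ Ym, g y = p.1) ∧ (∃ x ∉ Xm, f x = p.2) := by
          by_contra h; exact hpc ⟨hp, h⟩
        obtain ⟨⟨y, hy, hgy⟩, _⟩ := this
        exact ⟨y, Or.inl (Or.inr ⟨by simp [hgy, hpx], hy⟩)⟩
    · exact ⟨f x, Or.inl (Or.inl ⟨rfl, hx⟩)⟩
  -- covers Y
  · intro y
    by_cases hy : y ∈ Ym
    · obtain ⟨p, hp, hpy⟩ := hy
      by_cases hpc : p ∈ C
      · exact ⟨p.1, by rw [← hpy]; exact Or.inr hpc⟩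
      · have : (∃ y ∉ Ym, g y = p.1) ∧ (∃ x ∉ Xm, f x = p.2) := by
          by_contra h; exact hpc ⟨hp, h⟩
        obtain ⟨_, ⟨x, hx, hfx⟩⟩ := this
        exact ⟨x, Or.inl (Or.inl ⟨by simp [hfx, hpy], hx⟩)⟩
    · exact ⟨g y, Or.inl (Or.inr ⟨rfl, hy⟩)⟩
  -- minimality
  · intro R' hR' hR'sub
    -- exclusivity: every pair of R₀ has an endpoint whose only R₀-partner is the pair
    have hexcl : ∀ p ∈ A ∪ B ∪ C,
        (∀ q ∈ A ∪ B ∪ C, q.1 = p.1 → q = p) ∨ (∀ q ∈ A ∪ B ∪ C, q.2 = p.2 → q = p) := by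
      rintro p ((⟨hp2, hp1⟩ | ⟨hp1, hp2⟩) | ⟨hpM, hpn⟩)
      · -- p ∈ A : p.1 is exclusive
        left
        rintro q ((⟨hq2, hq1⟩ | ⟨hq1, hq2⟩) | ⟨hqM, _⟩) h
        · exact Prod.ext h (by rw [hq2, hp2, h])
        · exfalso
          have : q.1 ∈ Xm := hmax' q.1 q.2 (by rw [hq1]; exact hg q.2) hq2
          rw [h] at this; exact hp1 this
        · exact absurd (h ▸ ⟨q, hqM, rfl⟩) hp1
      · -- p ∈ B : p.2 is exclusive
        right
        rintro q ((⟨hq2, hq1⟩ | ⟨hq1, hq2⟩) | ⟨hqM, _⟩) h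
        · exfalso
          have : q.2 ∈ Ym := hmax q.1 q.2 (by rw [hq2]; exact hf q.1) hq1
          rw [h] at this; exact hp2 this
        · exact Prod.ext (by rw [hq1, hp1, h]) h
        · exact absurd (h ▸ ⟨q, hqM, rfl⟩) hp2
      · -- p ∈ C
        rw [not_and_or] at hpn
        rcases hpn with hng | hnf
        · -- no y ∉ Ym with g y = p.1 : p.1 is exclusive
          left
          rintro q ((⟨hq2, hq1⟩ | ⟨hq1, hq2⟩) | ⟨hqM, _⟩) h
          · exact absurd (h ▸ ⟨p, hpM, rfl⟩) hq1
          · exact absurd ⟨q.2, hq2, by rw [← hq1, h]⟩ hng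
          · exact hM1 q hqM p hpM h
        · -- no x ∉ Xm with f x = p.2 : p.2 is exclusive
          right
          rintro q ((⟨hq2, hq1⟩ | ⟨hq1, hq2⟩) | ⟨hqM, _⟩) h
          · exact absurd ⟨q.1, hq1, by rw [← hq2, h]⟩ hnf
          · exact absurd (h ▸ ⟨p, hpM, rfl⟩) hq2
          · exact hM2 q hqM p hpM h
    apply Subset.antisymm hR'sub
    intro p hp
    rcases hexcl p hp with hex | hex
    · obtain ⟨y, hy⟩ := hR'.1 p.1
      have : (p.1, y) = p := hex (p.1, y) (hR'sub hy) rfl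
      rwa [this] at hy
    · obtain ⟨x, hx⟩ := hR'.2 p.2
      have : (x, p.2) = p := hex (x, p.2) (hR'sub hx) rfl
      rwa [this] at hx
end

section
/- Let X be a bounded metric space and λΔ a simplex (a metric space all of whose non-zero distances equal λ > 0) with #X < #(λΔ). Then 2 d_GH(λΔ, X) = max{λ, diam X − λ}. -/
/-!
Gluing `Δ` to `X` along a surjection `Δ → X`, whose distortion is at most
`max λ (diam X - λ)`, gives the upper bound. Conversely, if `Δ` and `X` are `δ`-close in a
common space, then by pigeonhole two points of `Δ` lie near one point of `X`, so `λ ≤ 2δ`, and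
any two points of `X` lie near points of `Δ`, so `diam X ≤ λ + 2δ`.
-/

open Set Metric
open scoped ENNReal

universe u

open Function

namespace GHEmbed

attribute [local instance] GHEmbed.instZ

variable {X Y : Type u} [MetricSpace X] [MetricSpace Y] (e : GHEmbed X Y) {δ : ℝ≥0∞}

theorem exists_edist_lt_of_hd_lt_left (hδ : e.hd < δ) (x : X) :
    ∃ y, edist (e.f x) (e.g y) < δ := by
  obtain ⟨_, ⟨y, rfl⟩, hy⟩ := exists_edist_lt_of_hausdorffEDist_lt (mem_range_self x) hδ
  exact ⟨y, hy⟩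

theorem exists_edist_lt_of_hd_lt_right (hδ : e.hd < δ) (y : Y) :
    ∃ x, edist (e.f x) (e.g y) < δ := by
  obtain ⟨_, ⟨x, rfl⟩, hx⟩ := exists_edist_lt_of_hausdorffEDist_lt (mem_range_self y)
    (hausdorffEDist_comm.trans_lt hδ)
  exact ⟨x, by rwa [edist_comm]⟩

theorem ediam_univ_right_le (hδ : e.hd < δ) :
    ediam (univ : Set Y) ≤ ediam (univ : Set X) + 2 * δ := by
  refine ediam_le fun y _ y' _ => ?_
  obtain ⟨x, hx⟩ := e.exists_edist_lt_of_hd_lt_right hδ y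
  obtain ⟨x', hx'⟩ := e.exists_edist_lt_of_hd_lt_right hδ y'
  calc edist y y' = edist (e.g y) (e.g y') := (e.hg y y').symm
    _ ≤ edist (e.g y) (e.f x) + edist (e.f x) (e.f x') + edist (e.f x') (e.g y') :=
        edist_triangle4 _ _ _ _
    _ ≤ δ + ediam (univ : Set X) + δ := by
        rw [edist_comm (e.g y), e.hf x x']
        exact add_le_add (add_le_add hx.le (edist_le_ediam_of_mem (mem_univ x) (mem_univ x')))
          hx'.le
    _ = ediam (univ : Set X) + 2 * δ := by ring

theorem ofReal_le_two_mul_of_hd_lt_of_mk_lt {lam : ℝ}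
    (hsep : ∀ x x' : X, x ≠ x' → lam ≤ dist x x') (hcard : Cardinal.mk Y < Cardinal.mk X)
    (hδ : e.hd < δ) : ENNReal.ofReal lam ≤ 2 * δ := by
  choose φ hφ using e.exists_edist_lt_of_hd_lt_left hδ
  obtain ⟨x, x', hφx, hxx'⟩ : ∃ x x', φ x = φ x' ∧ x ≠ x' :=
    not_injective_iff.mp fun hinj => (Cardinal.mk_le_of_injective hinj).not_gt hcard
  calc ENNReal.ofReal lam ≤ edist x x' := by
        rw [edist_dist]; exact ENNReal.ofReal_le_ofReal (hsep x x' hxx')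
    _ = edist (e.f x) (e.f x') := (e.hf x x').symm
    _ ≤ edist (e.f x) (e.g (φ x)) + edist (e.f x') (e.g (φ x)) := edist_triangle_right _ _ _
    _ ≤ δ + δ := add_le_add (hφ x).le (hφx ▸ hφ x').le
    _ = 2 * δ := (two_mul δ).symm

theorem ofReal_diam_univ_right_sub_le {lam : ℝ} (hlam : 0 ≤ lam)
    (hX : ∀ x x' : X, dist x x' ≤ lam) (hY : Bornology.IsBounded (univ : Set Y))
    (hδ : e.hd < δ) : ENNReal.ofReal (diam (univ : Set Y) - lam) ≤ 2 * δ := by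
  have hdiamX : ediam (univ : Set X) ≤ ENNReal.ofReal lam :=
    ediam_le_of_forall_dist_le fun x _ x' _ => hX x x'
  rw [ENNReal.ofReal_sub _ hlam, diam, ENNReal.ofReal_toReal hY.ediam_ne_top, tsub_le_iff_left]
  exact (e.ediam_univ_right_le hδ).trans (by gcongr)

end GHEmbed

theorem le_two_mul_ghDist {X Y : Type u} [MetricSpace X] [MetricSpace Y] {a : ℝ≥0∞}
    (h : ∀ (e : GHEmbed X Y) (δ : ℝ≥0∞), e.hd < δ → a ≤ 2 * δ) : a ≤ 2 * ghDist X Y := by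
  rw [mul_comm,
    ← ENNReal.div_le_iff_le_mul (Or.inl two_ne_zero) (Or.inl ENNReal.ofNat_ne_top)]
  refine le_of_forall_gt_imp_ge_of_dense fun δ hδ => ?_
  obtain ⟨e, he⟩ := iInf_lt_iff.mp hδ
  exact ENNReal.div_le_of_le_mul' (h e δ he)

theorem ghDist_le_of_surjective {X Y : Type u} [MetricSpace X] [MetricSpace Y] [Nonempty X]
    {f : X → Y} (hf : Surjective f) {r : ℝ} (hr : 0 < r)
    (hdis : ∀ p q, |dist p q - dist (f p) (f q)| ≤ 2 * r) :
    ghDist X Y ≤ ENNReal.ofReal r := by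
  let _ : MetricSpace (X ⊕ Y) := glueMetricApprox id f r hr hdis
  let e : GHEmbed X Y :=
    ⟨X ⊕ Y, Sum.inl, Sum.inr, Isometry.of_dist_eq fun _ _ => rfl,
      Isometry.of_dist_eq fun _ _ => rfl⟩
  have hglued (p : X) : edist (Sum.inl p : X ⊕ Y) (Sum.inr (f p)) ≤ ENNReal.ofReal r := by
    rw [edist_dist]; exact ENNReal.ofReal_le_ofReal (glueDist_glued_points id f r p).le
  refine (iInf_le _ e).trans (hausdorffEDist_le_of_mem_edist ?_ ?_)
  · rintro _ ⟨p, rfl⟩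
    exact ⟨_, mem_range_self _, hglued p⟩
  · rintro _ ⟨y, rfl⟩
    obtain ⟨p, rfl⟩ := hf y
    exact ⟨_, mem_range_self _, by rw [edist_comm]; exact hglued p⟩

theorem abs_dist_sub_dist_le_of_dist_eq {Δ X : Type u} [MetricSpace Δ] [MetricSpace X]
    {lam : ℝ} (hlam : 0 ≤ lam) (hΔ : ∀ p q : Δ, p ≠ q → dist p q = lam)
    (hX : Bornology.IsBounded (univ : Set X)) (f : Δ → X) (p q : Δ) :
    |dist p q - dist (f p) (f q)| ≤ max lam (diam (univ : Set X) - lam) := by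
  rcases eq_or_ne p q with rfl | hpq
  · rw [dist_self, dist_self, sub_self, abs_zero]; exact le_max_of_le_left hlam
  have hdiam := dist_le_diam_of_mem hX (mem_univ (f p)) (mem_univ (f q))
  rw [hΔ p q hpq, abs_le]
  constructor <;> linarith [le_max_left lam (diam (univ : Set X) - lam),
    le_max_right lam (diam (univ : Set X) - lam), dist_nonneg (x := f p) (y := f q)]

/-- Distance from a bounded space `X` to a simplex of strictly larger cardinality. -/
theorem stmt_12 {Δ X : Type u} [MetricSpace Δ] [MetricSpace X] [Nonempty X]
    {lam : ℝ} (hlam : 0 < lam)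
    (hΔ : ∀ x y : Δ, x ≠ y → dist x y = lam)
    (hX : Bornology.IsBounded (Set.univ : Set X))
    (hcard : Cardinal.mk X < Cardinal.mk Δ) :
    2 * ghDist Δ X
      = ENNReal.ofReal (max lam (Metric.diam (Set.univ : Set X) - lam)) := by
  set m := max lam (diam (univ : Set X) - lam)
  refine le_antisymm ?upper (le_two_mul_ghDist fun e δ hδ => ?lower)
  case upper =>
    have : Nonempty Δ := Cardinal.mk_ne_zero_iff.mp (pos_of_gt hcard).ne'
    obtain ⟨i⟩ := hcard.le
    have hm : 0 < m / 2 := half_pos (lt_max_of_lt_left hlam)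
    calc 2 * ghDist Δ X ≤ 2 * ENNReal.ofReal (m / 2) := by
          gcongr
          refine ghDist_le_of_surjective (invFun_surjective i.injective) hm fun p q => ?_
          rw [mul_div_cancel₀ _ two_ne_zero]
          exact abs_dist_sub_dist_le_of_dist_eq hlam.le hΔ hX _ p q
      _ = ENNReal.ofReal m := by
          rw [← ENNReal.ofReal_ofNat, ← ENNReal.ofReal_mul zero_le_two,
            mul_div_cancel₀ _ two_ne_zero]
  case lower =>
    have hΔle (p q : Δ) : dist p q ≤ lam := by
      rcases eq_or_ne p q with rfl | hpq
      · rw [dist_self]; exact hlam.le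
      · exact (hΔ p q hpq).le
    rw [ENNReal.ofReal_max]
    exact max_le (e.ofReal_le_two_mul_of_hd_lt_of_mk_lt (fun p q h => (hΔ p q h).ge) hcard hδ)
      (e.ofReal_diam_univ_right_sub_le hlam.le hΔle hX hδ)
end
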